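/- Let L > 0, T > 0, b ∈ ℝ, δ > 0, and let ψ : ℝ → ℝ be a positive four times continuously differentiable function. Let u : [0,T] × ℝ × [0,L] → ℝ be infinitely differentiable, vanishing whenever |x| ≥ R for some R > 0, and satisfying u(t,x,0) = u(t,x,L) = u_yy(t,x,0) = u_yy(t,x,L) = 0 for all t, x. Let f₀, f₁, f₂ : [0,T] × ℝ × [0,L] → ℝ be continuously differentiable, and suppose u satisfies pointwise the equation u_t + b u_x + u_xxx + u_xyy + δ(u_xxxx + u_yyyy) = f₀ + ∂_x f₁ + ∂_y f₂. Then for every t ∈ [0,T]: ∬_Σ u²(t) ψ dx dy + ∫₀^t [ − b ∬_Σ u² ψ' + ∬_Σ (3 u_x² + u_y²) ψ' − ∬_Σ u² ψ''' + 2δ ∬_Σ (u_xx² + u_yy²) ψ − 4δ ∬_Σ u_x² ψ'' + δ ∬_Σ u² ψ⁽⁴⁾ ] dτ = ∬_Σ u²(0) ψ dx dy + ∫₀^t [ 2 ∬_Σ f₀ u ψ − 2 ∬_Σ ( f₁ (u ψ)_x + f₂ u_y ψ ) ] dτ. -/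

import Mathlib

open MeasureTheory Real Set

noncomputable section

/-- Partial derivative in the time variable. -/
def Dt (u : ℝ → ℝ → ℝ → ℝ) (t x y : ℝ) : ℝ := deriv (fun s => u s x y) t

/-- Partial derivative in `x`. -/
def Dx (u : ℝ → ℝ → ℝ → ℝ) (t x y : ℝ) : ℝ := deriv (fun s => u t s y) x

/-- Partial derivative in `y`. -/
def Dy (u : ℝ → ℝ → ℝ → ℝ) (t x y : ℝ) : ℝ := deriv (fun s => u t x s) y

/-!
Multiply the equation by `2 u ψ`. The product rule writes
`2 u ψ (b u_x + u_xxx + u_xyy + δ (u_xxxx + u_yyyy) - ∂ₓ f₁ - ∂ᵧ f₂)` as the divergence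
`∂ₓ energyFluxX + ∂ᵧ energyFluxY`, plus the dissipation density, plus
`2 (f₁ (u ψ)_x + f₂ u_y ψ)`. The `x`-flux vanishes for large `|x|`, and the `y`-flux vanishes on
`y = 0` and `y = L` because `u = u_yy = 0` there, so the divergence integrates to zero over the
strip. Hence `d/dt ∬ u² ψ = ∬ 2 u u_t ψ` is the source term minus the dissipation, and the
identity follows by integrating in time.
-/

open Function Filter Topology
open scoped ContDiff

local notation:max "↿³" v:max => fun p : ℝ × ℝ × ℝ => v (Prod.fst p) (Prod.fst (Prod.snd p)) (Prod.snd (Prod.snd p))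

section PartialDerivatives

variable {R : ℝ} {v : ℝ → ℝ → ℝ → ℝ}

lemma hasDerivAt_Dt (hv : Differentiable ℝ ↿³v) (t x y : ℝ) :
    HasDerivAt (fun s => v s x y) (Dt v t x y) t :=
  (show DifferentiableAt ℝ (fun s => v s x y) t by fun_prop).hasDerivAt

lemma hasDerivAt_Dx (hv : Differentiable ℝ ↿³v) (t x y : ℝ) :
    HasDerivAt (fun s => v t s y) (Dx v t x y) x :=
  (show DifferentiableAt ℝ (fun s => v t s y) x by fun_prop).hasDerivAt

lemma hasDerivAt_Dy (hv : Differentiable ℝ ↿³v) (t x y : ℝ) :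
    HasDerivAt (fun s => v t x s) (Dy v t x y) y :=
  (show DifferentiableAt ℝ (fun s => v t x s) y by fun_prop).hasDerivAt

lemma Dt_eq_fderiv (hv : Differentiable ℝ ↿³v) (t x y : ℝ) :
    Dt v t x y = fderiv ℝ ↿³v (t, x, y) (1, 0, 0) :=
  ((hv _).hasFDerivAt.comp_hasDerivAt t ((hasDerivAt_id t).prodMk
    ((hasDerivAt_const t x).prodMk (hasDerivAt_const t y)))).deriv

lemma Dx_eq_fderiv (hv : Differentiable ℝ ↿³v) (t x y : ℝ) :
    Dx v t x y = fderiv ℝ ↿³v (t, x, y) (0, 1, 0) :=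
  ((hv _).hasFDerivAt.comp_hasDerivAt x ((hasDerivAt_const x t).prodMk
    ((hasDerivAt_id x).prodMk (hasDerivAt_const x y)))).deriv

lemma Dy_eq_fderiv (hv : Differentiable ℝ ↿³v) (t x y : ℝ) :
    Dy v t x y = fderiv ℝ ↿³v (t, x, y) (0, 0, 1) :=
  ((hv _).hasFDerivAt.comp_hasDerivAt y ((hasDerivAt_const y t).prodMk
    ((hasDerivAt_const y x).prodMk (hasDerivAt_id y)))).deriv

lemma contDiff_Dt {m n : WithTop ℕ∞} (hv : ContDiff ℝ n ↿³v) (hmn : m + 1 ≤ n) :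
    ContDiff ℝ m ↿³(Dt v) := by
  simp only [Dt_eq_fderiv (hv.differentiable (zero_lt_one.trans_le (le_add_self.trans hmn)).ne')]
  exact (hv.fderiv_right hmn).clm_apply contDiff_const

lemma contDiff_Dx {m n : WithTop ℕ∞} (hv : ContDiff ℝ n ↿³v) (hmn : m + 1 ≤ n) :
    ContDiff ℝ m ↿³(Dx v) := by
  simp only [Dx_eq_fderiv (hv.differentiable (zero_lt_one.trans_le (le_add_self.trans hmn)).ne')]
  exact (hv.fderiv_right hmn).clm_apply contDiff_const

lemma contDiff_Dy {m n : WithTop ℕ∞} (hv : ContDiff ℝ n ↿³v) (hmn : m + 1 ≤ n) :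
    ContDiff ℝ m ↿³(Dy v) := by
  simp only [Dy_eq_fderiv (hv.differentiable (zero_lt_one.trans_le (le_add_self.trans hmn)).ne')]
  exact (hv.fderiv_right hmn).clm_apply contDiff_const

@[fun_prop]
lemma ContDiff.Dt (hv : ContDiff ℝ ∞ ↿³v) : ContDiff ℝ ∞ ↿³(Dt v) :=
  contDiff_Dt hv (by simp)

@[fun_prop]
lemma ContDiff.Dx (hv : ContDiff ℝ ∞ ↿³v) : ContDiff ℝ ∞ ↿³(Dx v) :=
  contDiff_Dx hv (by simp)

@[fun_prop]
lemma ContDiff.Dy (hv : ContDiff ℝ ∞ ↿³v) : ContDiff ℝ ∞ ↿³(Dy v) :=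
  contDiff_Dy hv (by simp)

lemma Dx_Dy_comm (hv : ContDiff ℝ 2 ↿³v) : Dx (Dy v) = Dy (Dx v) := by
  funext t x y
  have hd : Differentiable ℝ ↿³v := hv.differentiable (by norm_num)
  have hd' : Differentiable ℝ (fderiv ℝ ↿³v) :=
    (hv.fderiv_right (m := 1) (by norm_num)).differentiable (by norm_num)
  have hdw : ∀ w, Differentiable ℝ fun p => fderiv ℝ ↿³v p w := fun w =>
    hd'.clm_apply (differentiable_const w)
  have second : ∀ e w, fderiv ℝ (fun p => fderiv ℝ ↿³v p w) (t, x, y) e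
      = fderiv ℝ (fderiv ℝ ↿³v) (t, x, y) e w := fun e w => by
    rw [fderiv_clm_apply (hd' _) (differentiableAt_const w)]
    simp
  rw [show Dy v = fun t x y => fderiv ℝ ↿³v (t, x, y) (0, 0, 1) from funext₃ (Dy_eq_fderiv hd),
    show Dx v = fun t x y => fderiv ℝ ↿³v (t, x, y) (0, 1, 0) from funext₃ (Dx_eq_fderiv hd),
    Dx_eq_fderiv (hdw _), Dy_eq_fderiv (hdw _), second, second,
    (hv.contDiffAt.isSymmSndFDerivAt (by simp)).eq]

lemma Dx_eq_zero_of_lt_abs (hv0 : ∀ t x y, R < |x| → v t x y = 0) (t x y : ℝ) (hx : R < |x|) :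
    Dx v t x y = 0 := by
  have : (fun s => v t s y) =ᶠ[𝓝 x] fun _ => 0 :=
    eventually_of_mem ((isOpen_lt continuous_const continuous_abs).mem_nhds hx)
      fun s hs => hv0 t s y hs
  rw [Dx, this.deriv_eq, deriv_const]

lemma Dy_eq_zero_of_lt_abs (hv0 : ∀ t x y, R < |x| → v t x y = 0) (t x y : ℝ) (hx : R < |x|) :
    Dy v t x y = 0 := by
  simp [Dy, hv0 t x _ hx]

end PartialDerivatives

section StripIntegral

variable {L R : ℝ}

def stripMeasure (L : ℝ) : Measure (ℝ × ℝ) := volume.prod (volume.restrict (Ioo 0 L))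

lemma Continuous.integrable_of_eq_zero_of_lt_abs {f : ℝ → ℝ} (hf : Continuous f)
    (hf0 : ∀ x, R < |x| → f x = 0) : Integrable f :=
  hf.integrable_of_hasCompactSupport <| HasCompactSupport.intro (isCompact_Icc (a := -R) (b := R))
    fun x hx => hf0 x <| by by_contra h; exact hx (abs_le.mp (not_lt.mp h))

lemma integrable_stripMeasure {g : ℝ → ℝ → ℝ} (hg : Continuous fun z : ℝ × ℝ => g z.1 z.2)
    (hg0 : ∀ x y, R < |x| → g x y = 0) : Integrable (uncurry g) (stripMeasure L) := by
  have hμ : stripMeasure L = (volume : Measure (ℝ × ℝ)).restrict (univ ×ˢ Ioo 0 L) := by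
    rw [stripMeasure, Measure.volume_eq_prod, ← Measure.prod_restrict, Measure.restrict_univ]
  rw [hμ]
  refine IntegrableOn.of_forall_sdiff_eq_zero (s := Icc (-R) R ×ˢ Icc 0 L)
    (hg.continuousOn.integrableOn_compact (isCompact_Icc.prod isCompact_Icc))
    (MeasurableSet.univ.prod measurableSet_Ioo) ?_
  rintro ⟨x, y⟩ ⟨⟨-, hy⟩, hxy⟩
  refine hg0 x y ?_
  by_contra h
  exact hxy ⟨abs_le.mp (not_lt.mp h), Ioo_subset_Icc_self hy⟩

lemma integral_strip_eq_integral_stripMeasure {g : ℝ → ℝ → ℝ}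
    (hg : Integrable (uncurry g) (stripMeasure L)) :
    ∫ x, ∫ y in Ioo 0 L, g x y = ∫ z, uncurry g z ∂stripMeasure L :=
  (integral_prod _ hg).symm

lemma integral_strip_add {f g : ℝ → ℝ → ℝ} (hf : Integrable (uncurry f) (stripMeasure L))
    (hg : Integrable (uncurry g) (stripMeasure L)) :
    ∫ x, ∫ y in Ioo 0 L, (f x y + g x y)
      = (∫ x, ∫ y in Ioo 0 L, f x y) + ∫ x, ∫ y in Ioo 0 L, g x y := by
  rw [integral_strip_eq_integral_stripMeasure hf, integral_strip_eq_integral_stripMeasure hg,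
    integral_strip_eq_integral_stripMeasure (g := fun x y => f x y + g x y) (hf.add hg)]
  exact integral_add hf hg

lemma integral_strip_sub {f g : ℝ → ℝ → ℝ} (hf : Integrable (uncurry f) (stripMeasure L))
    (hg : Integrable (uncurry g) (stripMeasure L)) :
    ∫ x, ∫ y in Ioo 0 L, (f x y - g x y)
      = (∫ x, ∫ y in Ioo 0 L, f x y) - ∫ x, ∫ y in Ioo 0 L, g x y := by
  rw [integral_strip_eq_integral_stripMeasure hf, integral_strip_eq_integral_stripMeasure hg,
    integral_strip_eq_integral_stripMeasure (g := fun x y => f x y - g x y) (hf.sub hg)]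
  exact integral_sub hf hg

lemma integral_strip_const_mul (c : ℝ) (g : ℝ → ℝ → ℝ) :
    ∫ x, ∫ y in Ioo 0 L, c * g x y = c * ∫ x, ∫ y in Ioo 0 L, g x y := by
  simp only [integral_const_mul]

lemma integral_strip_neg (g : ℝ → ℝ → ℝ) :
    ∫ x, ∫ y in Ioo 0 L, -g x y = -∫ x, ∫ y in Ioo 0 L, g x y := by
  simp only [integral_neg]

lemma integral_strip_eq_setIntegral {g : ℝ → ℝ → ℝ} (hg : Continuous fun z : ℝ × ℝ => g z.1 z.2)
    (hg0 : ∀ x y, R < |x| → g x y = 0) :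
    ∫ x, ∫ y in Ioo 0 L, g x y = ∫ z in Icc (-R) R ×ˢ Icc 0 L, g z.1 z.2 := by
  rw [Measure.volume_eq_prod, setIntegral_prod _
    (hg.continuousOn.integrableOn_compact (isCompact_Icc.prod isCompact_Icc))]
  simp only [integral_Icc_eq_integral_Ioo (x := (0 : ℝ))]
  refine (setIntegral_eq_integral_of_forall_compl_eq_zero fun x hx => ?_).symm
  have hx : R < |x| := by by_contra h; exact hx (abs_le.mp (not_lt.mp h))
  simp [hg0 x _ hx]

variable {v : ℝ → ℝ → ℝ → ℝ}

lemma integral_strip_Dx_eq_zero (hv : ContDiff ℝ 1 ↿³v) (hv0 : ∀ t x y, R < |x| → v t x y = 0)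
    (t : ℝ) : ∫ x, ∫ y in Ioo 0 L, Dx v t x y = 0 := by
  have hc : Continuous ↿³(Dx v) := (contDiff_Dx (m := 0) hv (by simp)).continuous
  have hd : Differentiable ℝ ↿³v := hv.differentiable one_ne_zero
  have hslice : ∀ y, ∫ x, Dx v t x y = 0 := fun y =>
    integral_eq_zero_of_hasDerivAt_of_integrable (fun x => hasDerivAt_Dx hd t x y)
      ((show Continuous fun x => Dx v t x y by fun_prop).integrable_of_eq_zero_of_lt_abs
        fun x hx => Dx_eq_zero_of_lt_abs hv0 t x y hx)
      ((show Continuous fun x => v t x y by fun_prop).integrable_of_eq_zero_of_lt_abs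
        fun x hx => hv0 t x y hx)
  rw [integral_integral_swap (integrable_stripMeasure (R := R) (by fun_prop)
    fun x y hx => Dx_eq_zero_of_lt_abs hv0 t x y hx)]
  simp [hslice]

lemma integral_strip_Dy_eq_zero (hv : ContDiff ℝ 1 ↿³v) (hv0 : ∀ t x, v t x 0 = 0)
    (hvL : ∀ t x, v t x L = 0) (hL : 0 ≤ L) (t : ℝ) :
    ∫ x, ∫ y in Ioo 0 L, Dy v t x y = 0 := by
  have hc : Continuous ↿³(Dy v) := (contDiff_Dy (m := 0) hv (by simp)).continuous
  have hd : Differentiable ℝ ↿³v := hv.differentiable one_ne_zero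
  have hslice : ∀ x, ∫ y in Ioo 0 L, Dy v t x y = 0 := fun x => by
    rw [← integral_Ioc_eq_integral_Ioo, ← intervalIntegral.integral_of_le hL,
      intervalIntegral.integral_eq_sub_of_hasDerivAt (fun y _ => hasDerivAt_Dy hd t x y)
        ((show Continuous fun y => Dy v t x y by fun_prop).intervalIntegrable 0 L), hv0, hvL,
      sub_zero]
  simp [hslice]

end StripIntegral

section ParametricIntegral

lemma hasDerivAt_setIntegral_of_continuous {X : Type*} [TopologicalSpace X] [T2Space X]
    [SecondCountableTopology X] [MeasurableSpace X] [OpensMeasurableSpace X] {μ : Measure X}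
    [IsFiniteMeasureOnCompacts μ] {K : Set X} (hK : IsCompact K) {F F' : ℝ → X → ℝ}
    (hF : Continuous (uncurry F)) (hF' : Continuous (uncurry F'))
    (hd : ∀ t x, HasDerivAt (F · x) (F' t x) t) (t₀ : ℝ) :
    HasDerivAt (fun t => ∫ x in K, F t x ∂μ) (∫ x in K, F' t₀ x ∂μ) t₀ := by
  obtain ⟨C, hC⟩ := ((isCompact_closedBall t₀ 1).prod hK).exists_bound_of_continuousOn
    hF'.continuousOn
  have : IsFiniteMeasure (μ.restrict K) := isFiniteMeasure_restrict.mpr hK.measure_lt_top.ne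
  refine (hasDerivAt_integral_of_dominated_loc_of_deriv_le (bound := fun _ => C)
    (Metric.ball_mem_nhds t₀ one_pos) ?_ ?_ ?_ ?_ (integrable_const C) ?_).2
  · exact Eventually.of_forall fun t => (hF.comp (Continuous.prodMk_right t)).aestronglyMeasurable
  · exact (hF.comp (Continuous.prodMk_right t₀)).continuousOn.integrableOn_compact hK
  · exact (hF'.comp (Continuous.prodMk_right t₀)).aestronglyMeasurable
  · filter_upwards [ae_restrict_mem hK.measurableSet] with x hx t ht
    exact hC (t, x) ⟨Metric.ball_subset_closedBall ht, hx⟩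
  · exact Eventually.of_forall fun x t _ => hd t x

variable {L R : ℝ} {v v' : ℝ → ℝ → ℝ → ℝ}

lemma continuous_integral_strip (hv : Continuous ↿³v) (hv0 : ∀ t x y, R < |x| → v t x y = 0) :
    Continuous fun t => ∫ x, ∫ y in Ioo 0 L, v t x y := by
  have hrect : ∀ t, ∫ x, ∫ y in Ioo 0 L, v t x y = ∫ z in Icc (-R) R ×ˢ Icc 0 L, v t z.1 z.2 :=
    fun t => integral_strip_eq_setIntegral (by fun_prop) (hv0 t)
  simp only [hrect]
  exact continuous_parametric_integral_of_continuous (by fun_prop)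
    (isCompact_Icc.prod isCompact_Icc)

lemma hasDerivAt_integral_strip (hv : Continuous ↿³v) (hv' : Continuous ↿³v')
    (hv0 : ∀ t x y, R < |x| → v t x y = 0) (hv'0 : ∀ t x y, R < |x| → v' t x y = 0)
    (hd : ∀ t x y, HasDerivAt (fun s => v s x y) (v' t x y) t) (t : ℝ) :
    HasDerivAt (fun t => ∫ x, ∫ y in Ioo 0 L, v t x y) (∫ x, ∫ y in Ioo 0 L, v' t x y) t := by
  have hrect : ∀ t, ∫ x, ∫ y in Ioo 0 L, v t x y = ∫ z in Icc (-R) R ×ˢ Icc 0 L, v t z.1 z.2 :=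
    fun t => integral_strip_eq_setIntegral (by fun_prop) (hv0 t)
  rw [funext hrect, integral_strip_eq_setIntegral (by fun_prop) (hv'0 t)]
  exact hasDerivAt_setIntegral_of_continuous (isCompact_Icc.prod isCompact_Icc) (by fun_prop)
    (by fun_prop) (fun t z => hd t z.1 z.2) t

end ParametricIntegral

lemma add_integral_eq_add_integral_of_hasDerivAt {E E' S D : ℝ → ℝ} {a b : ℝ} (hab : a ≤ b)
    (hE : ∀ τ ∈ Icc a b, HasDerivAt E (E' τ) τ) (hE' : Continuous E') (hS : Continuous S)
    (hD : ∀ τ ∈ Icc a b, E' τ = S τ - D τ) :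
    E b + ∫ τ in a..b, D τ = E a + ∫ τ in a..b, S τ := by
  rw [← uIcc_of_le hab] at hE hD
  have hftc : ∫ τ in a..b, E' τ = E b - E a :=
    intervalIntegral.integral_eq_sub_of_hasDerivAt hE (hE'.intervalIntegrable a b)
  have hDS : ∫ τ in a..b, D τ = ∫ τ in a..b, (S τ - E' τ) :=
    intervalIntegral.integral_congr fun τ hτ => by simp only [hD τ hτ]; ring
  rw [hDS, intervalIntegral.integral_sub (hS.intervalIntegrable a b) (hE'.intervalIntegrable a b),
    hftc]
  ring

section IteratedDeriv

variable {ψ : ℝ → ℝ}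

lemma hasDerivAt_iteratedDeriv {n : WithTop ℕ∞} (hψ : ContDiff ℝ n ψ) {k : ℕ}
    (hk : (k : WithTop ℕ∞) < n) (x : ℝ) :
    HasDerivAt (iteratedDeriv k ψ) (iteratedDeriv (k + 1) ψ x) x := by
  rw [iteratedDeriv_succ]
  exact (hψ.differentiable_iteratedDeriv k hk x).hasDerivAt

lemma ContDiff.contDiff_one_iteratedDeriv {n k : ℕ} (hψ : ContDiff ℝ n ψ) (hk : k < n) :
    ContDiff ℝ 1 (iteratedDeriv k ψ) :=
  (contDiff_nat_succ_iff_contDiff_one_iteratedDeriv.mp (hψ.of_le (by exact_mod_cast hk))).2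

end IteratedDeriv

section EnergyFlux

variable (b δ : ℝ) (ψ : ℝ → ℝ) (u f₁ f₂ : ℝ → ℝ → ℝ → ℝ)

def energyFluxX (t x y : ℝ) : ℝ :=
  b * u t x y ^ 2 * ψ x
    + (2 * u t x y * ψ x * Dx (Dx u) t x y - Dx u t x y ^ 2 * ψ x
      - 2 * u t x y * Dx u t x y * deriv ψ x + u t x y ^ 2 * iteratedDeriv 2 ψ x)
    - Dy u t x y ^ 2 * ψ x
    + δ * (2 * u t x y * ψ x * Dx (Dx (Dx u)) t x y
      - 2 * (Dx u t x y * ψ x + u t x y * deriv ψ x) * Dx (Dx u) t x y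
      + 2 * Dx u t x y ^ 2 * deriv ψ x + 2 * u t x y * Dx u t x y * iteratedDeriv 2 ψ x
      - u t x y ^ 2 * iteratedDeriv 3 ψ x)
    - 2 * u t x y * ψ x * f₁ t x y

def energyFluxY (t x y : ℝ) : ℝ :=
  2 * u t x y * ψ x * Dx (Dy u) t x y
    + δ * (2 * u t x y * ψ x * Dy (Dy (Dy u)) t x y - 2 * Dy u t x y * ψ x * Dy (Dy u) t x y)
    - 2 * u t x y * ψ x * f₂ t x y

def energyDissipation (t x y : ℝ) : ℝ :=
  -(b * (u t x y ^ 2 * deriv ψ x)) + (3 * Dx u t x y ^ 2 + Dy u t x y ^ 2) * deriv ψ x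
    - u t x y ^ 2 * iteratedDeriv 3 ψ x
    + 2 * δ * ((Dx (Dx u) t x y ^ 2 + Dy (Dy u) t x y ^ 2) * ψ x)
    - 4 * δ * (Dx u t x y ^ 2 * iteratedDeriv 2 ψ x) + δ * (u t x y ^ 2 * iteratedDeriv 4 ψ x)

variable {b δ ψ u f₁ f₂}

lemma Dx_energyFluxX (hu : ContDiff ℝ ∞ ↿³u) (hf₁ : Differentiable ℝ ↿³f₁)
    (hψ : ContDiff ℝ 4 ψ) (t x y : ℝ) :
    Dx (energyFluxX b δ ψ u f₁) t x y
      = 2 * u t x y * ψ x * (b * Dx u t x y + Dx (Dx (Dx u)) t x y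
          + δ * Dx (Dx (Dx (Dx u))) t x y - Dx f₁ t x y)
        + b * u t x y ^ 2 * deriv ψ x - 3 * Dx u t x y ^ 2 * deriv ψ x
        + u t x y ^ 2 * iteratedDeriv 3 ψ x
        - 2 * Dy u t x y * Dx (Dy u) t x y * ψ x - Dy u t x y ^ 2 * deriv ψ x
        - δ * (2 * Dx (Dx u) t x y ^ 2 * ψ x - 4 * Dx u t x y ^ 2 * iteratedDeriv 2 ψ x
          + u t x y ^ 2 * iteratedDeriv 4 ψ x)
        - 2 * f₁ t x y * (Dx u t x y * ψ x + u t x y * deriv ψ x) := by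
  have ddx : ∀ {v : ℝ → ℝ → ℝ → ℝ}, ContDiff ℝ ∞ ↿³v →
      HasDerivAt (fun s => v t s y) (Dx v t x y) x :=
    fun hv => hasDerivAt_Dx (hv.differentiable (by simp)) t x y
  have u0 := ddx hu
  have u1 := ddx hu.Dx
  have u2 := ddx hu.Dx.Dx
  have u3 := ddx hu.Dx.Dx.Dx
  have uy := ddx hu.Dy
  have g₁ := hasDerivAt_Dx hf₁ t x y
  have ψ0 : HasDerivAt ψ (deriv ψ x) x := (hψ.differentiable (by simp) x).hasDerivAt
  have ψ1 : HasDerivAt (deriv ψ) (iteratedDeriv 2 ψ x) x := by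
    simpa using hasDerivAt_iteratedDeriv hψ (k := 1) (by norm_num) x
  have ψ2 : HasDerivAt (iteratedDeriv 2 ψ) (iteratedDeriv 3 ψ x) x :=
    hasDerivAt_iteratedDeriv hψ (by norm_num) x
  have ψ3 : HasDerivAt (iteratedDeriv 3 ψ) (iteratedDeriv 4 ψ x) x :=
    hasDerivAt_iteratedDeriv hψ (by norm_num) x
  have hP : HasDerivAt (fun s => energyFluxX b δ ψ u f₁ t s y) _ x :=
    ((((u0.pow 2).const_mul b).mul ψ0).add
      (((((u0.const_mul 2).mul ψ0).mul u2).sub ((u1.pow 2).mul ψ0)).sub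
        (((u0.const_mul 2).mul u1).mul ψ1) |>.add ((u0.pow 2).mul ψ2))).sub
      ((uy.pow 2).mul ψ0) |>.add
      ((((((u0.const_mul 2).mul ψ0).mul u3).sub
        ((((u1.mul ψ0).add (u0.mul ψ1)).const_mul 2).mul u2)).add
        (((u1.pow 2).const_mul 2).mul ψ1) |>.add (((u0.const_mul 2).mul u1).mul ψ2) |>.sub
        ((u0.pow 2).mul ψ3)).const_mul δ) |>.sub (((u0.const_mul 2).mul ψ0).mul g₁)
  rw [Dx, hP.deriv]
  simp only [Pi.add_apply, Pi.mul_apply, Pi.pow_apply]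
  ring

lemma Dy_energyFluxY (hu : ContDiff ℝ ∞ ↿³u) (hf₂ : Differentiable ℝ ↿³f₂) (t x y : ℝ) :
    Dy (energyFluxY δ ψ u f₂) t x y
      = 2 * u t x y * ψ x * (Dx (Dy (Dy u)) t x y + δ * Dy (Dy (Dy (Dy u))) t x y - Dy f₂ t x y)
        + 2 * Dy u t x y * Dx (Dy u) t x y * ψ x - 2 * δ * Dy (Dy u) t x y ^ 2 * ψ x
        - 2 * f₂ t x y * Dy u t x y * ψ x := by
  have ddy : ∀ {v : ℝ → ℝ → ℝ → ℝ}, ContDiff ℝ ∞ ↿³v →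
      HasDerivAt (fun s => v t x s) (Dy v t x y) y :=
    fun hv => hasDerivAt_Dy (hv.differentiable (by simp)) t x y
  have w0 := ddy hu
  have w1 := ddy hu.Dy
  have w2 := ddy hu.Dy.Dy
  have w3 := ddy hu.Dy.Dy.Dy
  have wx := ddy hu.Dy.Dx
  have g₂ := hasDerivAt_Dy hf₂ t x y
  have hQ : HasDerivAt (fun s => energyFluxY δ ψ u f₂ t x s) _ y :=
    ((((w0.const_mul 2).mul_const (ψ x)).mul wx).add
      (((((w0.const_mul 2).mul_const (ψ x)).mul w3).sub
        (((w1.const_mul 2).mul_const (ψ x)).mul w2)).const_mul δ)).sub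
      (((w0.const_mul 2).mul_const (ψ x)).mul g₂)
  rw [Dy, hQ.deriv, Dx_Dy_comm (hu.Dy.of_le (WithTop.coe_le_coe.mpr le_top))]
  ring

lemma Dx_energyFluxX_add_Dy_energyFluxY (hu : ContDiff ℝ ∞ ↿³u) (hf₁ : Differentiable ℝ ↿³f₁)
    (hf₂ : Differentiable ℝ ↿³f₂) (hψ : ContDiff ℝ 4 ψ) (t x y : ℝ) :
    Dx (energyFluxX b δ ψ u f₁) t x y + Dy (energyFluxY δ ψ u f₂) t x y
      = 2 * u t x y * ψ x * (b * Dx u t x y + Dx (Dx (Dx u)) t x y + Dx (Dy (Dy u)) t x y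
          + δ * (Dx (Dx (Dx (Dx u))) t x y + Dy (Dy (Dy (Dy u))) t x y)
          - Dx f₁ t x y - Dy f₂ t x y)
        - energyDissipation b δ ψ u t x y
        - 2 * (f₁ t x y * (Dx u t x y * ψ x + u t x y * deriv ψ x)
          + f₂ t x y * Dy u t x y * ψ x) := by
  rw [Dx_energyFluxX hu hf₁ hψ, Dy_energyFluxY hu hf₂, energyDissipation]
  ring

lemma contDiff_energyFluxX (hu : ContDiff ℝ ∞ ↿³u) (hf₁ : ContDiff ℝ 1 ↿³f₁)
    (hψ : ContDiff ℝ 4 ψ) : ContDiff ℝ 1 ↿³(energyFluxX b δ ψ u f₁) := by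
  have hψ₀ : ContDiff ℝ 1 ψ := hψ.of_le (by norm_num)
  have hψ₁ : ContDiff ℝ 1 (deriv ψ) := by
    simpa using hψ.contDiff_one_iteratedDeriv (k := 1) (by norm_num)
  have hψ₂ := hψ.contDiff_one_iteratedDeriv (k := 2) (by norm_num)
  have hψ₃ := hψ.contDiff_one_iteratedDeriv (k := 3) (by norm_num)
  unfold energyFluxX
  fun_prop (disch := simp)

lemma contDiff_energyFluxY (hu : ContDiff ℝ ∞ ↿³u) (hf₂ : ContDiff ℝ 1 ↿³f₂)
    (hψ : ContDiff ℝ 4 ψ) : ContDiff ℝ 1 ↿³(energyFluxY δ ψ u f₂) := by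
  have hψ₀ : ContDiff ℝ 1 ψ := hψ.of_le (by norm_num)
  unfold energyFluxY
  fun_prop (disch := simp)

end EnergyFlux

section EnergyIdentity

variable {L R b δ : ℝ} {ψ : ℝ → ℝ} {u f₀ f₁ f₂ : ℝ → ℝ → ℝ → ℝ}

lemma energy_rate_eq (hL : 0 ≤ L) (hu : ContDiff ℝ ∞ ↿³u) (hu0 : ∀ t x y, R < |x| → u t x y = 0)
    (hbc0 : ∀ t x, u t x 0 = 0) (hbcL : ∀ t x, u t x L = 0)
    (hbcyy0 : ∀ t x, Dy (Dy u) t x 0 = 0) (hbcyyL : ∀ t x, Dy (Dy u) t x L = 0)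
    (hf₀ : Continuous ↿³f₀) (hf₁ : ContDiff ℝ 1 ↿³f₁) (hf₂ : ContDiff ℝ 1 ↿³f₂)
    (hψ : ContDiff ℝ 4 ψ) {t : ℝ}
    (hpde : ∀ x : ℝ, ∀ y ∈ Icc (0:ℝ) L,
      Dt u t x y + b * Dx u t x y + Dx (Dx (Dx u)) t x y + Dx (Dy (Dy u)) t x y
          + δ * (Dx (Dx (Dx (Dx u))) t x y + Dy (Dy (Dy (Dy u))) t x y)
        = f₀ t x y + Dx f₁ t x y + Dy f₂ t x y) :
    ∫ x, ∫ y in Ioo 0 L, 2 * u t x y * Dt u t x y * ψ x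
      = (2 * (∫ x : ℝ, ∫ y in Ioo (0:ℝ) L, f₀ t x y * u t x y * ψ x)
          - 2 * (∫ x : ℝ, ∫ y in Ioo (0:ℝ) L,
              (f₁ t x y * (Dx u t x y * ψ x + u t x y * deriv ψ x) + f₂ t x y * Dy u t x y * ψ x)))
        - (-(b * ∫ x : ℝ, ∫ y in Ioo (0:ℝ) L, (u t x y) ^ 2 * deriv ψ x)
          + (∫ x : ℝ, ∫ y in Ioo (0:ℝ) L, (3 * (Dx u t x y) ^ 2 + (Dy u t x y) ^ 2) * deriv ψ x)
          - (∫ x : ℝ, ∫ y in Ioo (0:ℝ) L, (u t x y) ^ 2 * iteratedDeriv 3 ψ x)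
          + 2 * δ * (∫ x : ℝ, ∫ y in Ioo (0:ℝ) L,
              ((Dx (Dx u) t x y) ^ 2 + (Dy (Dy u) t x y) ^ 2) * ψ x)
          - 4 * δ * (∫ x : ℝ, ∫ y in Ioo (0:ℝ) L, (Dx u t x y) ^ 2 * iteratedDeriv 2 ψ x)
          + δ * (∫ x : ℝ, ∫ y in Ioo (0:ℝ) L, (u t x y) ^ 2 * iteratedDeriv 4 ψ x)) := by
  have hux0 := Dx_eq_zero_of_lt_abs hu0
  have huy0 := Dy_eq_zero_of_lt_abs hu0
  have huxx0 := Dx_eq_zero_of_lt_abs hux0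
  have huyy0 := Dy_eq_zero_of_lt_abs huy0
  have hP0 : ∀ t x y, R < |x| → energyFluxX b δ ψ u f₁ t x y = 0 := fun t x y hx => by
    simp [energyFluxX, hu0 t x y hx, hux0 t x y hx, huy0 t x y hx]
  have hQ0 : ∀ t x y, R < |x| → energyFluxY δ ψ u f₂ t x y = 0 := fun t x y hx => by
    simp [energyFluxY, hu0 t x y hx, huy0 t x y hx]
  have hP := contDiff_energyFluxX (b := b) (δ := δ) hu hf₁ hψ
  have hQ := contDiff_energyFluxY (δ := δ) hu hf₂ hψ
  have hPx := (contDiff_Dx (m := 0) hP (by simp)).continuous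
  have hQy := (contDiff_Dy (m := 0) hQ (by simp)).continuous
  have hψ₁ : Continuous (deriv ψ) := by simpa using hψ.continuous_iteratedDeriv 1 (by norm_num)
  have hψ₂ := hψ.continuous_iteratedDeriv 2 (by norm_num)
  have hψ₃ := hψ.continuous_iteratedDeriv 3 (by norm_num)
  have hψ₄ := hψ.continuous_iteratedDeriv 4 (by norm_num)
  calc ∫ x, ∫ y in Ioo 0 L, 2 * u t x y * Dt u t x y * ψ x
      = ∫ x, ∫ y in Ioo 0 L, (2 * (f₀ t x y * u t x y * ψ x)
          - 2 * (f₁ t x y * (Dx u t x y * ψ x + u t x y * deriv ψ x) + f₂ t x y * Dy u t x y * ψ x)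
          - energyDissipation b δ ψ u t x y
          - Dx (energyFluxX b δ ψ u f₁) t x y - Dy (energyFluxY δ ψ u f₂) t x y) := by
        refine congrArg _ (funext fun x => setIntegral_congr_fun measurableSet_Ioo fun y hy => ?_)
        linear_combination (2 * u t x y * ψ x) * hpde x y (Ioo_subset_Icc_self hy)
          + Dx_energyFluxX_add_Dy_energyFluxY (b := b) (δ := δ) hu
            (hf₁.differentiable one_ne_zero) (hf₂.differentiable one_ne_zero) hψ t x y
    _ = _ := by
        simp only [energyDissipation]
        simp (disch := exact integrable_stripMeasure (R := R) (by fun_prop) (fun x y hx => by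
            simp [hx, hu0, hux0, huy0, huxx0, huyy0, Dx_eq_zero_of_lt_abs hP0,
              Dy_eq_zero_of_lt_abs hQ0])) only
          [integral_strip_add, integral_strip_sub, integral_strip_neg, integral_strip_const_mul]
        rw [integral_strip_Dx_eq_zero hP hP0, integral_strip_Dy_eq_zero hQ
          (fun t x => by simp [energyFluxY, hbc0, hbcyy0])
          (fun t x => by simp [energyFluxY, hbcL, hbcyyL]) hL, sub_zero, sub_zero]

lemma hasDerivAt_energy (hu : ContDiff ℝ ∞ ↿³u) (hu0 : ∀ t x y, R < |x| → u t x y = 0)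
    (hψ : Continuous ψ) (t : ℝ) :
    HasDerivAt (fun t => ∫ x, ∫ y in Ioo 0 L, u t x y ^ 2 * ψ x)
      (∫ x, ∫ y in Ioo 0 L, 2 * u t x y * Dt u t x y * ψ x) t :=
  hasDerivAt_integral_strip (R := R) (v := fun t x y => u t x y ^ 2 * ψ x)
    (v' := fun t x y => 2 * u t x y * Dt u t x y * ψ x) (by fun_prop) (by fun_prop)
    (fun t x y hx => by simp [hu0 t x y hx]) (fun t x y hx => by simp [hu0 t x y hx])
    (fun t x y => by
      simpa [mul_comm, mul_left_comm] using
        ((hasDerivAt_Dt (hu.differentiable (by simp)) t x y).pow 2).mul_const (ψ x)) t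

end EnergyIdentity

theorem weighted_energy_identity_general (L T b δ : ℝ) (hL : 0 < L)
    (ψ : ℝ → ℝ) (hψ : ContDiff ℝ 4 ψ)
    (u f₀ f₁ f₂ : ℝ → ℝ → ℝ → ℝ)
    (hu : ContDiff ℝ (⊤ : ℕ∞) (fun p : ℝ × ℝ × ℝ => u p.1 p.2.1 p.2.2))
    (hsupp : ∃ R > 0, ∀ t x y : ℝ, R ≤ |x| → u t x y = 0)
    (hbc0 : ∀ t x : ℝ, u t x 0 = 0) (hbcL : ∀ t x : ℝ, u t x L = 0)
    (hbcyy0 : ∀ t x : ℝ, Dy (Dy u) t x 0 = 0) (hbcyyL : ∀ t x : ℝ, Dy (Dy u) t x L = 0)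
    (hf₀ : ContDiff ℝ 1 (fun p : ℝ × ℝ × ℝ => f₀ p.1 p.2.1 p.2.2))
    (hf₁ : ContDiff ℝ 1 (fun p : ℝ × ℝ × ℝ => f₁ p.1 p.2.1 p.2.2))
    (hf₂ : ContDiff ℝ 1 (fun p : ℝ × ℝ × ℝ => f₂ p.1 p.2.1 p.2.2))
    (heq : ∀ t ∈ Icc (0:ℝ) T, ∀ x : ℝ, ∀ y ∈ Icc (0:ℝ) L,
      Dt u t x y + b * Dx u t x y + Dx (Dx (Dx u)) t x y + Dx (Dy (Dy u)) t x y
          + δ * (Dx (Dx (Dx (Dx u))) t x y + Dy (Dy (Dy (Dy u))) t x y)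
        = f₀ t x y + Dx f₁ t x y + Dy f₂ t x y) :
    ∀ t ∈ Icc (0:ℝ) T,
      (∫ x : ℝ, ∫ y in Ioo (0:ℝ) L, (u t x y) ^ 2 * ψ x)
        + (∫ τ in (0:ℝ)..t,
            (-(b * ∫ x : ℝ, ∫ y in Ioo (0:ℝ) L, (u τ x y) ^ 2 * deriv ψ x)
              + (∫ x : ℝ, ∫ y in Ioo (0:ℝ) L,
                  (3 * (Dx u τ x y) ^ 2 + (Dy u τ x y) ^ 2) * deriv ψ x)
              - (∫ x : ℝ, ∫ y in Ioo (0:ℝ) L, (u τ x y) ^ 2 * iteratedDeriv 3 ψ x)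
              + 2 * δ * (∫ x : ℝ, ∫ y in Ioo (0:ℝ) L,
                  ((Dx (Dx u) τ x y) ^ 2 + (Dy (Dy u) τ x y) ^ 2) * ψ x)
              - 4 * δ * (∫ x : ℝ, ∫ y in Ioo (0:ℝ) L,
                  (Dx u τ x y) ^ 2 * iteratedDeriv 2 ψ x)
              + δ * (∫ x : ℝ, ∫ y in Ioo (0:ℝ) L, (u τ x y) ^ 2 * iteratedDeriv 4 ψ x)))
      = (∫ x : ℝ, ∫ y in Ioo (0:ℝ) L, (u 0 x y) ^ 2 * ψ x)
        + (∫ τ in (0:ℝ)..t,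
            (2 * (∫ x : ℝ, ∫ y in Ioo (0:ℝ) L, f₀ τ x y * u τ x y * ψ x)
              - 2 * (∫ x : ℝ, ∫ y in Ioo (0:ℝ) L,
                  (f₁ τ x y * (Dx u τ x y * ψ x + u τ x y * deriv ψ x)
                    + f₂ τ x y * Dy u τ x y * ψ x)))) := by
  intro t ht
  obtain ⟨R, -, hR⟩ := hsupp
  have hu0 : ∀ t x y, R < |x| → u t x y = 0 := fun t x y hx => hR t x y hx.le
  have hux0 := Dx_eq_zero_of_lt_abs hu0
  have huy0 := Dy_eq_zero_of_lt_abs hu0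
  have hψ₀ := hψ.continuous
  have hψ₁ : Continuous (deriv ψ) := by simpa using hψ.continuous_iteratedDeriv 1 (by norm_num)
  have hrate := continuous_integral_strip (L := L) (R := R)
    (v := fun t x y => 2 * u t x y * Dt u t x y * ψ x) (by fun_prop)
    fun t x y hx => by simp [hu0 t x y hx]
  have hsource₀ := continuous_integral_strip (L := L) (R := R)
    (v := fun t x y => f₀ t x y * u t x y * ψ x) (by fun_prop)
    fun t x y hx => by simp [hu0 t x y hx]
  have hsource₁ := continuous_integral_strip (L := L) (R := R)
    (v := fun t x y => f₁ t x y * (Dx u t x y * ψ x + u t x y * deriv ψ x)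
      + f₂ t x y * Dy u t x y * ψ x) (by fun_prop)
    fun t x y hx => by simp [hu0 t x y hx, hux0 t x y hx, huy0 t x y hx]
  exact add_integral_eq_add_integral_of_hasDerivAt
    (E := fun t => ∫ x, ∫ y in Ioo 0 L, u t x y ^ 2 * ψ x) ht.1
    (fun τ _ => hasDerivAt_energy hu hu0 hψ₀ τ) hrate (by fun_prop)
    fun τ hτ => energy_rate_eq hL.le hu hu0 hbc0 hbcL hbcyy0 hbcyyL hf₀.continuous hf₁ hf₂ hψ
      (heq τ ⟨hτ.1, hτ.2.trans ht.2⟩)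

/-- Weighted `L²` energy identity for smooth solutions of the regularized linear
equation `u_t + b u_x + u_xxx + u_xyy + δ(u_xxxx + u_yyyy) = f₀ + f₁ₓ + f₂_y`. -/
theorem weighted_energy_identity (L T b δ : ℝ) (hL : 0 < L) (hT : 0 < T) (hδ : 0 < δ)
    (ψ : ℝ → ℝ) (hψ : ContDiff ℝ 4 ψ) (hψpos : ∀ x : ℝ, 0 < ψ x)
    (u f₀ f₁ f₂ : ℝ → ℝ → ℝ → ℝ)
    (hu : ContDiff ℝ (⊤ : ℕ∞) (fun p : ℝ × ℝ × ℝ => u p.1 p.2.1 p.2.2))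
    (hsupp : ∃ R > 0, ∀ t x y : ℝ, R ≤ |x| → u t x y = 0)
    (hbc0 : ∀ t x : ℝ, u t x 0 = 0) (hbcL : ∀ t x : ℝ, u t x L = 0)
    (hbcyy0 : ∀ t x : ℝ, Dy (Dy u) t x 0 = 0) (hbcyyL : ∀ t x : ℝ, Dy (Dy u) t x L = 0)
    (hf₀ : ContDiff ℝ 1 (fun p : ℝ × ℝ × ℝ => f₀ p.1 p.2.1 p.2.2))
    (hf₁ : ContDiff ℝ 1 (fun p : ℝ × ℝ × ℝ => f₁ p.1 p.2.1 p.2.2))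
    (hf₂ : ContDiff ℝ 1 (fun p : ℝ × ℝ × ℝ => f₂ p.1 p.2.1 p.2.2))
    (heq : ∀ t ∈ Icc (0:ℝ) T, ∀ x : ℝ, ∀ y ∈ Icc (0:ℝ) L,
      Dt u t x y + b * Dx u t x y + Dx (Dx (Dx u)) t x y + Dx (Dy (Dy u)) t x y
          + δ * (Dx (Dx (Dx (Dx u))) t x y + Dy (Dy (Dy (Dy u))) t x y)
        = f₀ t x y + Dx f₁ t x y + Dy f₂ t x y) :
    ∀ t ∈ Icc (0:ℝ) T,
      (∫ x : ℝ, ∫ y in Ioo (0:ℝ) L, (u t x y) ^ 2 * ψ x)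
        + (∫ τ in (0:ℝ)..t,
            (-(b * ∫ x : ℝ, ∫ y in Ioo (0:ℝ) L, (u τ x y) ^ 2 * deriv ψ x)
              + (∫ x : ℝ, ∫ y in Ioo (0:ℝ) L,
                  (3 * (Dx u τ x y) ^ 2 + (Dy u τ x y) ^ 2) * deriv ψ x)
              - (∫ x : ℝ, ∫ y in Ioo (0:ℝ) L, (u τ x y) ^ 2 * iteratedDeriv 3 ψ x)
              + 2 * δ * (∫ x : ℝ, ∫ y in Ioo (0:ℝ) L,
                  ((Dx (Dx u) τ x y) ^ 2 + (Dy (Dy u) τ x y) ^ 2) * ψ x)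
              - 4 * δ * (∫ x : ℝ, ∫ y in Ioo (0:ℝ) L,
                  (Dx u τ x y) ^ 2 * iteratedDeriv 2 ψ x)
              + δ * (∫ x : ℝ, ∫ y in Ioo (0:ℝ) L, (u τ x y) ^ 2 * iteratedDeriv 4 ψ x)))
      = (∫ x : ℝ, ∫ y in Ioo (0:ℝ) L, (u 0 x y) ^ 2 * ψ x)
        + (∫ τ in (0:ℝ)..t,
            (2 * (∫ x : ℝ, ∫ y in Ioo (0:ℝ) L, f₀ τ x y * u τ x y * ψ x)
              - 2 * (∫ x : ℝ, ∫ y in Ioo (0:ℝ) L,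
                  (f₁ τ x y * (Dx u τ x y * ψ x + u τ x y * deriv ψ x)
                    + f₂ τ x y * Dy u τ x y * ψ x)))) :=
  weighted_energy_identity_general L T b δ hL ψ hψ u f₀ f₁ f₂ hu hsupp hbc0 hbcL hbcyy0 hbcyyL hf₀
    hf₁ hf₂ heq
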